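/- arXiv:1403.6361 — 4 statements merged into one kernel-verified Lean document; each statement's English description precedes it below -/
import Mathlib

section
/- Let ρ be a density matrix on a finite-dimensional complex Hilbert space, let α > 1 and let ε ∈ (0,1). Then the smooth min-entropy of ρ is bounded below by its Rényi α-entropy as H_min^ε(ρ) ≥ H_α(ρ) − (1/(α−1))·log(1/ε). -/
/-!
Diagonalise `ρ = U diag(λ) U*` and put `c = (∑ λᵢ^α / ε)^(1/(α-1))`. Since
`λᵢ - min λᵢ c ≤ λᵢ^α / c^(α-1)`, the mass of `λ` above `c` is at most `∑ λᵢ^α / c^(α-1) = ε`.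
Cap `λ` at `c` and pour that mass back into the room left below `c`; there is enough room because
the power-mean inequality gives `n c ≥ 1`. The resulting probability vector `μ` is bounded by `c`
and at half `ℓ¹`-distance at most `ε` from `λ`, so `ρ' = U diag(μ) U*` is an admissible smoothing
of `ρ` with `H_min(ρ') ≥ -log c`, which is the right-hand side.
-/

open scoped BigOperators ComplexOrder

noncomputable section

/-- The trace norm of a matrix: the trace of the positive square root of `Xᴴ * X`
(for Hermitian `X` this is the sum of the absolute values of the eigenvalues). -/
def traceNorm {n : Type*} [Fintype n] [DecidableEq n] (X : Matrix n n ℂ) : ℝ :=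
  (((Matrix.PosSemidef.isHermitian (Matrix.posSemidef_conjTranspose_mul_self X)).eigenvectorUnitary
        : Matrix n n ℂ)
      * Matrix.diagonal (((↑) : ℝ → ℂ) ∘ Real.sqrt ∘
        (Matrix.PosSemidef.isHermitian (Matrix.posSemidef_conjTranspose_mul_self X)).eigenvalues)
      * (star (Matrix.PosSemidef.isHermitian
        (Matrix.posSemidef_conjTranspose_mul_self X)).eigenvectorUnitary : Matrix n n ℂ)).trace.re

open Finset

section CapRedistribute

variable {ι : Type*} [Fintype ι]

lemma one_le_card_rpow_mul_sum_rpow {l : ι → ℝ} (hl : ∀ i, 0 ≤ l i) (hl1 : ∑ i, l i = 1)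
    {α : ℝ} (hα : 1 ≤ α) :
    1 ≤ (Fintype.card ι : ℝ) ^ (α - 1) * ∑ i, l i ^ α := by
  simpa [hl1] using Real.rpow_sum_le_const_mul_sum_rpow_of_nonneg (s := univ) hα fun i _ => hl i

lemma one_le_card_mul_of_sum_rpow_le {l : ι → ℝ} (hl : ∀ i, 0 ≤ l i) (hl1 : ∑ i, l i = 1)
    {α c : ℝ} (hα : 1 < α) (hc : 0 ≤ c) (hlc : ∑ i, l i ^ α ≤ c ^ (α - 1)) :
    1 ≤ Fintype.card ι * c := by
  have hpow : 1 ≤ ((Fintype.card ι : ℝ) * c) ^ (α - 1) := by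
    rw [Real.mul_rpow (Nat.cast_nonneg _) hc]
    exact (one_le_card_rpow_mul_sum_rpow hl hl1 hα.le).trans (by gcongr)
  by_contra! h
  exact (Real.rpow_lt_one (by positivity) h (by linarith)).not_ge hpow

lemma sub_min_le_rpow_div_rpow {x c α : ℝ} (hx : 0 ≤ x) (hc : 0 < c) (hα : 1 ≤ α) :
    x - min x c ≤ x ^ α / c ^ (α - 1) := by
  rcases le_or_gt x c with hxc | hcx
  · rw [min_eq_left hxc, sub_self]
    positivity
  · have hx0 : 0 < x := hc.trans hcx
    calc x - min x c ≤ x * 1 := by rw [min_eq_right hcx.le, mul_one]; linarith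
      _ ≤ x * (x / c) ^ (α - 1) :=
        mul_le_mul_of_nonneg_left (Real.one_le_rpow ((one_le_div hc).2 hcx.le) (by linarith)) hx
      _ = x ^ α / c ^ (α - 1) := by
        rw [Real.div_rpow hx hc.le, Real.rpow_sub_one hx0.ne', mul_div, mul_div_cancel₀ _ hx0.ne']

def massAbove (l : ι → ℝ) (c : ℝ) : ℝ := ∑ i, (l i - min (l i) c)

/-- The denominator is the total room `∑ i, (c - min (l i) c)` left below `c`
(`sum_sub_min_eq`), so filling this fraction of it absorbs exactly `massAbove l c`. -/
def fillFraction (l : ι → ℝ) (c : ℝ) : ℝ :=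
  massAbove l c / (Fintype.card ι * c - 1 + massAbove l c)

def capRedistribute (l : ι → ℝ) (c : ℝ) : ι → ℝ :=
  fun i => min (l i) c + fillFraction l c * (c - min (l i) c)

lemma massAbove_nonneg (l : ι → ℝ) (c : ℝ) : 0 ≤ massAbove l c :=
  sum_nonneg fun _ _ => sub_nonneg.2 (min_le_left _ _)

lemma massAbove_le_sum_rpow_div {l : ι → ℝ} (hl : ∀ i, 0 ≤ l i) {c α : ℝ} (hc : 0 < c)
    (hα : 1 ≤ α) : massAbove l c ≤ (∑ i, l i ^ α) / c ^ (α - 1) := by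
  rw [massAbove, sum_div]
  exact sum_le_sum fun i _ => sub_min_le_rpow_div_rpow (hl i) hc hα

variable {l : ι → ℝ} {c : ℝ}

lemma sum_min_eq_one_sub_massAbove (hl1 : ∑ i, l i = 1) :
    ∑ i, min (l i) c = 1 - massAbove l c := by
  rw [massAbove, sum_sub_distrib, hl1, sub_sub_cancel]

lemma sum_sub_min_eq (hl1 : ∑ i, l i = 1) :
    ∑ i, (c - min (l i) c) = Fintype.card ι * c - 1 + massAbove l c := by
  rw [sum_sub_distrib, sum_min_eq_one_sub_massAbove hl1, sum_const, card_univ, nsmul_eq_mul]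
  ring

lemma fillFraction_nonneg (hc : 1 ≤ Fintype.card ι * c) : 0 ≤ fillFraction l c :=
  div_nonneg (massAbove_nonneg l c) (by linarith [massAbove_nonneg l c])

lemma fillFraction_le_one (hc : 1 ≤ Fintype.card ι * c) : fillFraction l c ≤ 1 :=
  div_le_one_of_le₀ (by linarith) (by linarith [massAbove_nonneg l c])

lemma sum_fillFraction_mul_sub_min (hl1 : ∑ i, l i = 1) (hc : 1 ≤ Fintype.card ι * c) :
    ∑ i, fillFraction l c * (c - min (l i) c) = massAbove l c := by
  rw [← mul_sum, sum_sub_min_eq hl1, fillFraction]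
  exact div_mul_cancel_of_imp fun h => by linarith [massAbove_nonneg l c]

lemma capRedistribute_nonneg (hl : ∀ i, 0 ≤ l i) (hc : 1 ≤ Fintype.card ι * c) (i : ι) :
    0 ≤ capRedistribute l c i := by
  have hc0 : 0 < c := pos_of_mul_pos_right (one_pos.trans_le hc) (Nat.cast_nonneg _)
  exact add_nonneg (le_min (hl i) hc0.le)
    (mul_nonneg (fillFraction_nonneg hc) (sub_nonneg.2 (min_le_right _ _)))

lemma capRedistribute_le (hc : 1 ≤ Fintype.card ι * c) (i : ι) : capRedistribute l c i ≤ c := by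
  have hroom : 0 ≤ c - min (l i) c := sub_nonneg.2 (min_le_right _ _)
  have := mul_le_of_le_one_left hroom (fillFraction_le_one (l := l) hc)
  rw [capRedistribute]
  linarith

lemma sum_capRedistribute (hl1 : ∑ i, l i = 1) (hc : 1 ≤ Fintype.card ι * c) :
    ∑ i, capRedistribute l c i = 1 := by
  simp only [capRedistribute]
  rw [sum_add_distrib, sum_min_eq_one_sub_massAbove hl1, sum_fillFraction_mul_sub_min hl1 hc,
    sub_add_cancel]

lemma sum_abs_sub_capRedistribute_le (hl1 : ∑ i, l i = 1) (hc : 1 ≤ Fintype.card ι * c) :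
    ∑ i, |l i - capRedistribute l c i| ≤ 2 * massAbove l c := by
  calc ∑ i, |l i - capRedistribute l c i|
      ≤ ∑ i, ((l i - min (l i) c) + fillFraction l c * (c - min (l i) c)) := by
        refine sum_le_sum fun i _ => abs_sub_le_iff.2 ⟨?_, ?_⟩ <;>
        · have := mul_nonneg (fillFraction_nonneg (l := l) hc)
            (sub_nonneg.2 (min_le_right (l i) c))
          have := min_le_left (l i) c
          simp only [capRedistribute]
          linarith
    _ = 2 * massAbove l c := by
        rw [sum_add_distrib, sum_fillFraction_mul_sub_min hl1 hc, massAbove, two_mul]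

lemma exists_capped_near_of_sum_rpow_le (hl : ∀ i, 0 ≤ l i) (hl1 : ∑ i, l i = 1)
    {α ε : ℝ} (hα : 1 < α) (hε : ε ≤ 1) (hc : 0 < c) (hlc : ∑ i, l i ^ α ≤ ε * c ^ (α - 1)) :
    ∃ μ : ι → ℝ, (∀ i, 0 ≤ μ i) ∧ ∑ i, μ i = 1 ∧ (∀ i, μ i ≤ c) ∧
      (1 / 2) * ∑ i, |l i - μ i| ≤ ε := by
  have hcα : 0 < c ^ (α - 1) := by positivity
  have hnc : 1 ≤ Fintype.card ι * c :=
    one_le_card_mul_of_sum_rpow_le hl hl1 hα hc.le (hlc.trans (mul_le_of_le_one_left hcα.le hε))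
  have hmass : massAbove l c ≤ ε :=
    (massAbove_le_sum_rpow_div hl hc hα.le).trans ((div_le_iff₀ hcα).2 hlc)
  refine ⟨capRedistribute l c, capRedistribute_nonneg hl hnc, sum_capRedistribute hl1 hnc,
    capRedistribute_le hnc, ?_⟩
  linarith [sum_abs_sub_capRedistribute_le hl1 hnc]

end CapRedistribute

section Supremum

variable {ι : Type*} [Fintype ι] {f : ι → ℝ}

lemma one_le_card_mul_iSup (hf : ∑ i, f i = 1) : 1 ≤ Fintype.card ι * ⨆ i, f i := by
  simpa [hf] using sum_le_card_nsmul univ f _ fun i _ => le_ciSup (Set.finite_range f).bddAbove i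

lemma iSup_pos_of_sum_eq_one (hf : ∑ i, f i = 1) : 0 < ⨆ i, f i :=
  pos_of_mul_pos_right (one_pos.trans_le (one_le_card_mul_iSup hf)) (Nat.cast_nonneg _)

lemma neg_logb_iSup_le_logb_card (hf : ∑ i, f i = 1) :
    -Real.logb 2 (⨆ i, f i) ≤ Real.logb 2 (Fintype.card ι) := by
  have h := one_le_card_mul_iSup hf
  have hsup := iSup_pos_of_sum_eq_one hf
  have hcard : (0 : ℝ) < Fintype.card ι := pos_of_mul_pos_left (one_pos.trans_le h) hsup.le
  have := Real.logb_nonneg one_lt_two h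
  rw [Real.logb_mul hcard.ne' hsup.ne'] at this
  linarith

end Supremum

lemma renyi_bound_eq_neg_logb {S ε α : ℝ} (hS : 0 < S) (hε : 0 < ε) (hα : α ≠ 1) :
    (1 / (1 - α)) * Real.logb 2 S - (1 / (α - 1)) * Real.logb 2 (1 / ε) =
      -Real.logb 2 ((S / ε) ^ (1 / (α - 1))) := by
  rw [Real.logb_rpow_eq_mul_logb_of_pos (by positivity), Real.logb_div hS.ne' hε.ne', one_div ε,
    Real.logb_inv]
  have : 1 - α ≠ 0 := sub_ne_zero.2 hα.symm
  have : α - 1 ≠ 0 := sub_ne_zero.2 hα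
  field_simp
  ring

open Matrix

lemma Matrix.IsHermitian.sum_eigenvalues_eq_one {ι : Type*} [Fintype ι] [DecidableEq ι]
    {A : Matrix ι ι ℂ} (hA : A.IsHermitian) (h : A.trace = 1) : ∑ i, hA.eigenvalues i = 1 := by
  simpa [h] using (congrArg Complex.re hA.trace_eq_sum_eigenvalues).symm

section ConjDiagonal

variable {ι : Type*} [Fintype ι] [DecidableEq ι] (U : unitaryGroup ι ℂ)

def conjDiagonal (d : ι → ℝ) : Matrix ι ι ℂ :=
  Unitary.conjStarAlgAut ℂ _ U (diagonal (RCLike.ofReal ∘ d))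

lemma Matrix.IsHermitian.eq_conjDiagonal {A : Matrix ι ι ℂ} (hA : A.IsHermitian) :
    A = conjDiagonal hA.eigenvectorUnitary hA.eigenvalues :=
  hA.spectral_theorem

lemma conjDiagonal_sub (d e : ι → ℝ) :
    conjDiagonal U d - conjDiagonal U e = conjDiagonal U (d - e) := by
  simp only [conjDiagonal, ← map_sub, diagonal_sub]
  congr 2
  ext i
  simp

lemma conjDiagonal_mul (d e : ι → ℝ) :
    conjDiagonal U d * conjDiagonal U e = conjDiagonal U (d * e) := by
  simp only [conjDiagonal, ← map_mul, diagonal_mul_diagonal]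
  congr 2
  ext i
  simp

lemma conjTranspose_conjDiagonal (d : ι → ℝ) : (conjDiagonal U d)ᴴ = conjDiagonal U d := by
  rw [← star_eq_conjTranspose, conjDiagonal, ← map_star, star_eq_conjTranspose,
    diagonal_conjTranspose]
  congr 2
  ext i
  simp

lemma trace_conjDiagonal (d : ι → ℝ) : (conjDiagonal U d).trace = ∑ i, (d i : ℂ) := by
  rw [conjDiagonal, Unitary.conjStarAlgAut_apply, trace_mul_cycle, Unitary.coe_star_mul_self,
    one_mul, trace_diagonal]
  rfl

lemma posSemidef_conjDiagonal {d : ι → ℝ} (hd : ∀ i, 0 ≤ d i) :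
    (conjDiagonal U d).PosSemidef := by
  have hdiag : (diagonal (RCLike.ofReal ∘ d) : Matrix ι ι ℂ).PosSemidef :=
    PosSemidef.diagonal fun i => by simpa using hd i
  simpa [conjDiagonal, star_eq_conjTranspose] using
    hdiag.mul_mul_conjTranspose_same (U : Matrix ι ι ℂ)

lemma iSup_eigenvalues_conjDiagonal (d : ι → ℝ) (h : (conjDiagonal U d).IsHermitian) :
    ⨆ i, h.eigenvalues i = ⨆ i, d i := by
  have hrange : Set.range h.eigenvalues = Set.range d := by
    ext x
    rw [← h.spectrum_real_eq_range_eigenvalues, ← spectrum.algebraMap_mem_iff ℂ]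
    simp [conjDiagonal]
  rw [← sSup_range, hrange, sSup_range]

lemma traceNorm_conjDiagonal (d : ι → ℝ) : traceNorm (conjDiagonal U d) = ∑ i, |d i| := by
  set X := conjDiagonal U d
  set Y := conjDiagonal U fun i => |d i|
  have hXX : Xᴴ * X = Y ^ 2 := by
    rw [conjTranspose_conjDiagonal, sq, conjDiagonal_mul, conjDiagonal_mul]
    congr 1
    ext i
    exact (abs_mul_abs_self (d i)).symm
  have hY : Y.PosSemidef := posSemidef_conjDiagonal U fun i => abs_nonneg (d i)
  have hsqrt : cfc Real.sqrt (Y ^ 2) = Y := by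
    open MatrixOrder in
    rw [← cfcₙ_eq_cfc (hf0 := Real.sqrt_zero), ← CFC.sqrt_eq_real_sqrt _ (hY.pow 2).nonneg,
      CFC.sqrt_sq Y hY.nonneg]
  have htraceNorm : traceNorm X = (cfc Real.sqrt (Xᴴ * X)).trace.re := by
    rw [(posSemidef_conjTranspose_mul_self X).isHermitian.cfc_eq]
    rfl
  rw [htraceNorm, hXX, hsqrt, trace_conjDiagonal]
  simp

lemma Matrix.IsHermitian.traceNorm_sub_conjDiagonal {A : Matrix ι ι ℂ} (hA : A.IsHermitian)
    (d : ι → ℝ) :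
    traceNorm (A - conjDiagonal hA.eigenvectorUnitary d) = ∑ i, |hA.eigenvalues i - d i| := by
  nth_rw 1 [hA.eq_conjDiagonal]
  rw [conjDiagonal_sub, traceNorm_conjDiagonal]
  rfl

end ConjDiagonal

/-- For a density matrix ρ, α > 1 and ε ∈ (0,1), the smooth min-entropy
(with logarithms base 2) is bounded below by the Rényi α-entropy:
`H_min^ε(ρ) ≥ H_α(ρ) − (1/(α−1))·log(1/ε)`. -/
theorem smooth_min_entropy_ge_renyi
    {n : ℕ} (ρ : Matrix (Fin n) (Fin n) ℂ)
    (hρ : ρ.PosSemidef) (hρ1 : ρ.trace = 1)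
    (α : ℝ) (hα : 1 < α) (ε : ℝ) (hε0 : 0 < ε) (hε1 : ε < 1) :
    sSup { h : ℝ | ∃ (ρ' : Matrix (Fin n) (Fin n) ℂ) (hρ' : ρ'.PosSemidef),
        ρ'.trace = 1 ∧ (1/2) * traceNorm (ρ - ρ') ≤ ε ∧
        h = - Real.logb 2 (⨆ i, hρ'.isHermitian.eigenvalues i) }
    ≥ (1 / (1 - α)) * Real.logb 2 (∑ i, hρ.isHermitian.eigenvalues i ^ α)
        - (1 / (α - 1)) * Real.logb 2 (1 / ε) := by
  set l := hρ.isHermitian.eigenvalues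
  have hl1 : ∑ i, l i = 1 := hρ.isHermitian.sum_eigenvalues_eq_one hρ1
  set S := ∑ i, l i ^ α
  have hS : 0 < S := pos_of_mul_pos_right
    (one_pos.trans_le (one_le_card_rpow_mul_sum_rpow hρ.eigenvalues_nonneg hl1 hα.le))
    (by positivity)
  set c := (S / ε) ^ (1 / (α - 1))
  have hc : 0 < c := by positivity
  have hcS : ε * c ^ (α - 1) = S := by
    rw [← Real.rpow_mul (by positivity), one_div_mul_cancel (by linarith), Real.rpow_one,
      mul_div_cancel₀ _ hε0.ne']
  obtain ⟨μ, hμ0, hμ1, hμc, hμl⟩ := exists_capped_near_of_sum_rpow_le hρ.eigenvalues_nonneg hl1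
    hα hε1.le hc hcS.ge
  have hρ' := posSemidef_conjDiagonal hρ.isHermitian.eigenvectorUnitary hμ0
  have htrace : (conjDiagonal hρ.isHermitian.eigenvectorUnitary μ).trace = 1 := by
    rw [trace_conjDiagonal]
    exact_mod_cast hμ1
  rw [ge_iff_le, renyi_bound_eq_neg_logb hS hε0 hα.ne']
  refine le_csSup_of_le ⟨Real.logb 2 n, ?_⟩
    ⟨_, hρ', htrace, hρ.isHermitian.traceNorm_sub_conjDiagonal μ ▸ hμl, rfl⟩ ?_
  · rintro _ ⟨σ, hσ, hσ1, -, rfl⟩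
    simpa using neg_logb_iSup_le_logb_card (hσ.isHermitian.sum_eigenvalues_eq_one hσ1)
  · rw [iSup_eigenvalues_conjDiagonal]
    exact neg_le_neg (Real.logb_le_logb_of_le one_lt_two (iSup_pos_of_sum_eq_one hμ1)
      (Real.iSup_le hμc hc.le))

end
end

section
/- Let ρ be a density matrix on a d-dimensional complex Hilbert space with d ≥ 2, and let α satisfy 1 < α < 1 + (log 3)/(16 log d). Then H_α(ρ) ≥ H(ρ) − 16(α−1)(log d)². -/
/-! For `0 ≤ x ≤ 1` and `ε ≥ 0`, `x ^ (1 + ε) = x · exp (ε log x) ≤ x (1 + ε log x + ε² log² x / 2)`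
because `exp (-t) ≤ 1 - t + t²/2` for `t ≥ 0`. Summing over the spectrum `λ` of `ρ` and using
`log S ≤ S - 1` gives `log ∑ λ^α ≤ (α-1) ∑ λ log λ + (α-1)²/2 ∑ λ log² λ`, and the second moment
`∑ λ log² λ` of the surprisal is at most `2 log² d + 8 ≤ 32 log² d / log 2`. Dividing by
`(1 - α) log 2 < 0` turns this into the claimed lower bound. -/

open scoped ComplexOrder

namespace Real

/-- Inverting `1 + t + t²/2 ≤ exp t` works because `(1 + t + t²/2)(1 - t + t²/2) = 1 + t⁴/4 ≥ 1`. -/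
lemma exp_neg_le_one_sub_add_sq_div_two {t : ℝ} (ht : 0 ≤ t) :
    exp (-t) ≤ 1 - t + t ^ 2 / 2 := by
  have hexp := quadratic_le_exp_of_nonneg ht
  have hq : 0 ≤ 1 - t + t ^ 2 / 2 := by nlinarith [sq_nonneg (t - 1)]
  rw [exp_neg, inv_le_iff_one_le_mul₀ (exp_pos t)]
  nlinarith [mul_le_mul_of_nonneg_left hexp hq, pow_nonneg ht 4]

lemma mul_log_sq_le_four {x : ℝ} (hx0 : 0 ≤ x) (hx1 : x ≤ 1) : x * log x ^ 2 ≤ 4 := by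
  rcases hx0.eq_or_lt with rfl | hx0
  · norm_num
  have hs := abs_log_mul_self_lt (√x) (sqrt_pos.2 hx0) (sqrt_le_one.2 hx1)
  have hsq : x * log x ^ 2 = 4 * (log √x * √x) ^ 2 := by
    rw [log_sqrt hx0.le, mul_pow, sq_sqrt hx0.le]; ring
  rw [hsq, ← sq_abs]
  nlinarith [abs_nonneg (log √x * √x)]

lemma rpow_one_add_le {x ε : ℝ} (hx0 : 0 ≤ x) (hx1 : x ≤ 1) (hε : 0 ≤ ε) :
    x ^ (1 + ε) ≤ x + ε * (x * log x) + ε ^ 2 / 2 * (x * log x ^ 2) := by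
  rcases hx0.eq_or_lt with rfl | hx0
  · simp [zero_rpow (by positivity : 1 + ε ≠ 0)]
  have hlog : log x ≤ 0 := log_nonpos hx0.le hx1
  have hexp := exp_neg_le_one_sub_add_sq_div_two (t := -(ε * log x)) (by nlinarith)
  rw [neg_neg] at hexp
  calc x ^ (1 + ε) = x * exp (ε * log x) := by
        rw [rpow_add hx0, rpow_one, rpow_def_of_pos hx0, mul_comm (log x)]
    _ ≤ x * (1 - -(ε * log x) + (-(ε * log x)) ^ 2 / 2) := by gcongr
    _ = x + ε * (x * log x) + ε ^ 2 / 2 * (x * log x ^ 2) := by ring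

/-- Split at `x = 1/n`: above it `|log x| ≤ log n`, below it write `x = u / n` with `u ≤ 1`. -/
lemma mul_log_sq_le {x n : ℝ} (hx0 : 0 ≤ x) (hx1 : x ≤ 1) (hn : 0 < n) :
    x * log x ^ 2 ≤ 2 * x * log n ^ 2 + 8 / n := by
  rcases hx0.eq_or_lt with rfl | hx0
  · simp only [zero_mul, mul_zero, zero_add]; positivity
  rcases le_or_gt n⁻¹ x with hxn | hxn
  · have hlb : -log n ≤ log x := by rw [← log_inv]; exact log_le_log (by positivity) hxn
    have hub : log x ≤ 0 := log_nonpos hx0.le hx1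
    have : log x ^ 2 ≤ log n ^ 2 := by nlinarith
    nlinarith [sq_nonneg (log n), div_pos (by norm_num : (0:ℝ) < 8) hn]
  · set u := n * x
    have hu0 : 0 ≤ u := by positivity
    have hu1 : u ≤ 1 := by
      calc u ≤ n * n⁻¹ := mul_le_mul_of_nonneg_left hxn.le hn.le
        _ = 1 := mul_inv_cancel₀ hn.ne'
    have hx : x = u / n := (mul_div_cancel_left₀ x hn.ne').symm
    have hlog : log x = log u - log n := by
      rw [hx, log_div (by positivity) hn.ne']
    calc x * log x ^ 2 ≤ x * (2 * log u ^ 2 + 2 * log n ^ 2) := by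
          rw [hlog]
          exact mul_le_mul_of_nonneg_left (by nlinarith [sq_nonneg (log u + log n)]) hx0.le
      _ = 2 / n * (u * log u ^ 2) + 2 * x * log n ^ 2 := by rw [hx]; field_simp
      _ ≤ 2 / n * 4 + 2 * x * log n ^ 2 := by gcongr; exact mul_log_sq_le_four hu0 hu1
      _ = 2 * x * log n ^ 2 + 8 / n := by ring

end Real

open Real

section ProbabilityVector

variable {ι : Type*} [Fintype ι] {p : ι → ℝ}

lemma le_one_of_sum_eq_one (hp0 : ∀ i, 0 ≤ p i) (hp1 : ∑ i, p i = 1) (i : ι) : p i ≤ 1 :=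
  hp1 ▸ Finset.single_le_sum (fun j _ ↦ hp0 j) (Finset.mem_univ i)

lemma sum_mul_log_sq_le (hp0 : ∀ i, 0 ≤ p i) (hp1 : ∑ i, p i = 1) :
    ∑ i, p i * log (p i) ^ 2 ≤ 2 * log (Fintype.card ι) ^ 2 + 8 := by
  obtain ⟨j, -, -⟩ := Finset.exists_ne_zero_of_sum_ne_zero (hp1 ▸ one_ne_zero)
  have hcard : (0 : ℝ) < Fintype.card ι := Nat.cast_pos.2 (Fintype.card_pos_iff.2 ⟨j⟩)
  calc ∑ i, p i * log (p i) ^ 2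
      ≤ ∑ i, (2 * p i * log (Fintype.card ι) ^ 2 + 8 / Fintype.card ι) :=
        Finset.sum_le_sum fun i _ ↦ mul_log_sq_le (hp0 i) (le_one_of_sum_eq_one hp0 hp1 i) hcard
    _ = 2 * log (Fintype.card ι) ^ 2 + 8 := by
        rw [Finset.sum_add_distrib, ← Finset.sum_mul, ← Finset.mul_sum, hp1]
        simp [Finset.card_univ]; field_simp

lemma log_sum_rpow_one_add_le (hp0 : ∀ i, 0 ≤ p i) (hp1 : ∑ i, p i = 1) {ε : ℝ} (hε : 0 ≤ ε) :
    log (∑ i, p i ^ (1 + ε)) ≤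
      ε * ∑ i, p i * log (p i) + ε ^ 2 / 2 * ∑ i, p i * log (p i) ^ 2 := by
  have hpos : 0 < ∑ i, p i ^ (1 + ε) := by
    obtain ⟨j, -, hj⟩ := Finset.exists_ne_zero_of_sum_ne_zero (hp1 ▸ one_ne_zero)
    exact Finset.sum_pos' (fun i _ ↦ rpow_nonneg (hp0 i) _)
      ⟨j, Finset.mem_univ j, rpow_pos_of_pos ((hp0 j).lt_of_ne' hj) _⟩
  have hsum := Finset.sum_le_sum fun i (_ : i ∈ Finset.univ) ↦
    rpow_one_add_le (hp0 i) (le_one_of_sum_eq_one hp0 hp1 i) hε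
  rw [Finset.sum_add_distrib, Finset.sum_add_distrib, hp1, ← Finset.mul_sum,
    ← Finset.mul_sum] at hsum
  linarith [log_le_sub_one_of_pos hpos]

end ProbabilityVector

lemma sq_log_add_four_le {n : ℝ} (hn : 2 ≤ n) : log n ^ 2 + 4 ≤ 16 * log n ^ 2 / log 2 := by
  have hl2 := log_two_gt_d9
  have hl2' := log_two_lt_d9
  have hln : log 2 ≤ log n := log_le_log (by norm_num) hn
  rw [le_div_iff₀ (by linarith)]
  nlinarith

lemma log_sum_rpow_one_add_le_of_two_le_card {ι : Type*} [Fintype ι] {p : ι → ℝ}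
    (hp0 : ∀ i, 0 ≤ p i) (hp1 : ∑ i, p i = 1) (hcard : 2 ≤ Fintype.card ι) {ε : ℝ} (hε : 0 ≤ ε) :
    log (∑ i, p i ^ (1 + ε)) ≤
      ε * ∑ i, p i * log (p i) + ε ^ 2 * (16 * log (Fintype.card ι) ^ 2 / log 2) := by
  have hlog := log_sum_rpow_one_add_le hp0 hp1 hε
  have hsq := sum_mul_log_sq_le hp0 hp1
  have hn := sq_log_add_four_le (n := Fintype.card ι) (by exact_mod_cast hcard)
  nlinarith [sq_nonneg ε]

theorem renyi_ge_vonNeumann_of_alpha_close_to_one_simplified_general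
    {d : ℕ} (hd : 2 ≤ d) (ρ : Matrix (Fin d) (Fin d) ℂ)
    (hρ : ρ.PosSemidef) (hρ1 : ρ.trace = 1) (α : ℝ)
    (hα1 : 1 < α) :
    (1 / (1 - α)) * Real.logb 2 (∑ i, hρ.isHermitian.eigenvalues i ^ α)
    ≥ (- ∑ i, hρ.isHermitian.eigenvalues i * Real.logb 2 (hρ.isHermitian.eigenvalues i))
        - 16 * (α - 1) * (Real.logb 2 d) ^ 2 := by
  set p := hρ.isHermitian.eigenvalues
  have hp1 : ∑ i, p i = 1 := by
    simpa [hρ1] using (congrArg Complex.re hρ.isHermitian.trace_eq_sum_eigenvalues).symm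
  have hε : 0 < α - 1 := by linarith
  have key := log_sum_rpow_one_add_le_of_two_le_card hρ.eigenvalues_nonneg hp1
    (by rwa [Fintype.card_fin]) hε.le
  rw [add_sub_cancel, Fintype.card_fin] at key
  have h1α : 1 - α ≠ 0 := by linarith
  rw [ge_iff_le, ← sub_nonneg]
  refine (div_nonneg (sub_nonneg.2 key) (by positivity : 0 ≤ (α - 1) * log 2)).trans_eq ?_
  simp only [logb, ← Finset.sum_div, mul_div_assoc']
  field_simp [hε.ne']
  ring

/-- For a density matrix ρ on a d-dimensional space with d ≥ 2 and
1 < α < 1 + (log 3)/(16 log d) (logs base 2), the Rényi α-entropy satisfies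
`H_α(ρ) ≥ H(ρ) − 16(α−1)(log d)²`. -/
theorem renyi_ge_vonNeumann_of_alpha_close_to_one_simplified
    {d : ℕ} (hd : 2 ≤ d) (ρ : Matrix (Fin d) (Fin d) ℂ)
    (hρ : ρ.PosSemidef) (hρ1 : ρ.trace = 1) (α : ℝ)
    (hα1 : 1 < α)
    (hα2 : α < 1 + Real.logb 2 3 / (16 * Real.logb 2 d)) :
    (1 / (1 - α)) * Real.logb 2 (∑ i, hρ.isHermitian.eigenvalues i ^ α)
    ≥ (- ∑ i, hρ.isHermitian.eigenvalues i * Real.logb 2 (hρ.isHermitian.eigenvalues i))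
        - 16 * (α - 1) * (Real.logb 2 d) ^ 2 :=
  renyi_ge_vonNeumann_of_alpha_close_to_one_simplified_general hd ρ hρ hρ1 α hα1
end

section
/- Let (ρ¹_i)_{i∈I₁} be density matrices on a finite-dimensional complex Hilbert space E₁ and (ρ²_i)_{i∈I₂} density matrices on a finite-dimensional complex Hilbert space E₂, with I₁, I₂ finite sets. Then for every joint probability distribution p on I₁ × I₂ with marginals p₁ on I₁ and p₂ on I₂: S_acc({p_{(i₁,i₂)}, ρ¹_{i₁} ⊗ ρ²_{i₂}}) ≤ S_acc({p₁, ρ¹}) + S_acc({p₂, ρ²}), where ⊗ denotes the Kronecker (tensor) product. -/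
open scoped BigOperators ComplexOrder

noncomputable section

/-- A probability distribution on a finite type. -/
def IsProbDist {I : Type*} [Fintype I] (p : I → ℝ) : Prop :=
  (∀ i, 0 ≤ p i) ∧ ∑ i, p i = 1

/-- Shannon entropy (base 2), with the convention 0·log 0 = 0 (automatic since
`Real.logb 2 0 = 0`). -/
def shannonEntropy {I : Type*} [Fintype I] (p : I → ℝ) : ℝ :=
  - ∑ i, p i * Real.logb 2 (p i)

/-- A density matrix: positive semidefinite with trace 1. -/
def IsDensityMatrix {n : Type*} [Fintype n] (ρ : Matrix n n ℂ) : Prop :=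
  ρ.PosSemidef ∧ ρ.trace = 1

/-- A POVM: positive semidefinite elements summing to the identity. -/
def IsPOVM {n J : Type*} [Fintype n] [DecidableEq n] [Fintype J]
    (Q : J → Matrix n n ℂ) : Prop :=
  (∀ j, (Q j).PosSemidef) ∧ ∑ j, Q j = 1

/-- Conditional Shannon entropy `H(A|B)_P = H(P) − H(P_B)` of a joint distribution
on `A × B`, where `P_B` is the marginal on `B`. -/
def condEntropy {A B : Type*} [Fintype A] [Fintype B] (P : A × B → ℝ) : ℝ :=
  shannonEntropy P - shannonEntropy (fun b => ∑ a, P (a, b))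

open Kronecker

/-- A POVM on the space with index type `n`, with an arbitrary finite outcome set. -/
structure POVM (n : Type) [Fintype n] [DecidableEq n] where
  ι : Type
  [fin : Fintype ι]
  elem : ι → Matrix n n ℂ
  psd : ∀ j, (elem j).PosSemidef
  sum_eq_one : ∑ j, elem j = 1

attribute [instance] POVM.fin

/-- The accessible equivocation `S_acc({p_i, ρ_i})`: the infimum over all POVMs `Q`
(with arbitrary finite outcome sets) of the conditional Shannon entropy `H(I|J)` of the
joint distribution `P(i,j) = p_i·tr(ρ_i Q_j)`. -/
def Sacc {n : Type} [Fintype n] [DecidableEq n] {I : Type} [Fintype I]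
    (p : I → ℝ) (ρ : I → Matrix n n ℂ) : ℝ :=
  sInf { h : ℝ | ∃ Q : POVM n,
    h = condEntropy (fun x : I × Q.ι => p x.1 * ((ρ x.1 * Q.elem x.2).trace).re) }

/-! Measuring the product ensemble with the product POVM `Q₁ ⊗ Q₂` produces outcome statistics
whose `(I₁, J₁)`- and `(I₂, J₂)`-marginals are exactly those of measuring each factor with `Qₖ`
alone: the other factor sums out because its states have trace one. It therefore suffices that
conditional entropy is subadditive, `H(I₁I₂ | J₁J₂) ≤ H(I₁ | J₁) + H(I₂ | J₂)`, which is Gibbs'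
inequality with the product of the two marginal conditional distributions as reference. -/

open Real

section CondEntropy

variable {A B : Type*} [Fintype A]

lemma mul_logb_mul {a b c : ℝ} (h : a ≠ 0 → b ≠ 0 ∧ c ≠ 0) :
    a * logb 2 (b * c) = a * logb 2 b + a * logb 2 c := by
  rcases eq_or_ne a 0 with rfl | ha
  · simp
  · rw [logb_mul (h ha).1 (h ha).2, mul_add]

lemma mul_logb_div {a b c : ℝ} (h : a ≠ 0 → b ≠ 0 ∧ c ≠ 0) :
    a * logb 2 (b / c) = a * logb 2 b - a * logb 2 c := by
  rcases eq_or_ne a 0 with rfl | ha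
  · simp
  · rw [logb_div (h ha).1 (h ha).2, mul_sub]

lemma mul_logb_div_le {a b : ℝ} (ha : 0 ≤ a) (hb : 0 ≤ b) (hab : 0 < a → 0 < b) :
    a * logb 2 (b / a) ≤ (b - a) / log 2 := by
  rcases ha.eq_or_lt with rfl | ha
  · simpa using div_nonneg hb (log_nonneg one_le_two)
  · have hlog := log_le_sub_one_of_pos (div_pos (hab ha) ha)
    rw [logb, ← mul_div_assoc, div_le_div_iff_of_pos_right (log_pos one_lt_two)]
    calc a * log (b / a) ≤ a * (b / a - 1) := mul_le_mul_of_nonneg_left hlog ha.le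
      _ = b - a := by field_simp

/-- **Gibbs' inequality** for unnormalised nonnegative weights. -/
theorem sum_mul_logb_le_sum_mul_logb_self {ι : Type*} [Fintype ι] {P Q : ι → ℝ} (hP : 0 ≤ P)
    (hQ : 0 ≤ Q) (hsum : ∑ i, Q i ≤ ∑ i, P i) (hpos : ∀ i, 0 < P i → 0 < Q i) :
    ∑ i, P i * logb 2 (Q i) ≤ ∑ i, P i * logb 2 (P i) := by
  have hne : ∀ i, P i ≠ 0 → Q i ≠ 0 ∧ P i ≠ 0 := fun i hi =>
    ⟨(hpos i ((hP i).lt_of_ne' hi)).ne', hi⟩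
  rw [← sub_nonpos, ← Finset.sum_sub_distrib]
  calc ∑ i, (P i * logb 2 (Q i) - P i * logb 2 (P i))
      = ∑ i, P i * logb 2 (Q i / P i) :=
        Finset.sum_congr rfl fun i _ => (mul_logb_div (hne i)).symm
    _ ≤ ∑ i, (Q i - P i) / log 2 :=
        Finset.sum_le_sum fun i _ => mul_logb_div_le (hP i) (hQ i) (hpos i)
    _ = (∑ i, Q i - ∑ i, P i) / log 2 := by rw [← Finset.sum_div, Finset.sum_sub_distrib]
    _ ≤ 0 := div_nonpos_of_nonpos_of_nonneg (sub_nonpos.mpr hsum) (log_nonneg one_le_two)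

lemma sum_marginal_mul [Fintype B] (P : A × B → ℝ) (f : B → ℝ) :
    ∑ b, (∑ a, P (a, b)) * f b = ∑ x, P x * f x.2 := by
  simp only [Finset.sum_mul, Fintype.sum_prod_type_right]

lemma le_sum_marginal {P : A × B → ℝ} (hP : 0 ≤ P) (x : A × B) : P x ≤ ∑ a, P (a, x.2) :=
  Finset.single_le_sum (f := fun a => P (a, x.2)) (fun _ _ => hP _) (Finset.mem_univ x.1)

lemma condEntropy_eq_sum_marginal_mul_logb_sub [Fintype B] {P : A × B → ℝ} :
    condEntropy P = ∑ x, P x * logb 2 (∑ a, P (a, x.2)) - ∑ x, P x * logb 2 (P x) := by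
  rw [condEntropy, shannonEntropy, shannonEntropy,
    ← sum_marginal_mul P fun b => logb 2 (∑ a, P (a, b))]
  ring

def condProb (P : A × B → ℝ) (x : A × B) : ℝ := P x / ∑ a, P (a, x.2)

lemma condProb_nonneg {P : A × B → ℝ} (hP : 0 ≤ P) : 0 ≤ condProb P := fun _ =>
  div_nonneg (hP _) (Finset.sum_nonneg fun _ _ => hP _)

lemma condProb_pos {P : A × B → ℝ} (hP : 0 ≤ P) {x : A × B} (hx : 0 < P x) :
    0 < condProb P x :=
  div_pos hx (hx.trans_le (le_sum_marginal hP x))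

lemma condProb_le_one {P : A × B → ℝ} (hP : 0 ≤ P) (x : A × B) : condProb P x ≤ 1 :=
  div_le_one_of_le₀ (le_sum_marginal hP x) (Finset.sum_nonneg fun _ _ => hP _)

lemma sum_condProb_le_one (P : A × B → ℝ) (b : B) : ∑ a, condProb P (a, b) ≤ 1 := by
  simp only [condProb, ← Finset.sum_div]
  exact div_self_le_one _

lemma condEntropy_eq_neg_sum_mul_logb_condProb [Fintype B] {P : A × B → ℝ} (hP : 0 ≤ P) :
    condEntropy P = -∑ x, P x * logb 2 (condProb P x) := by
  have hne : ∀ x, P x ≠ 0 → P x ≠ 0 ∧ ∑ a, P (a, x.2) ≠ 0 := fun x hx =>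
    ⟨hx, (((hP x).lt_of_ne' hx).trans_le (le_sum_marginal hP x)).ne'⟩
  simp only [condProb, mul_logb_div (hne _), Finset.sum_sub_distrib,
    condEntropy_eq_sum_marginal_mul_logb_sub]
  ring

lemma condEntropy_nonneg [Fintype B] {P : A × B → ℝ} (hP : 0 ≤ P) : 0 ≤ condEntropy P := by
  rw [condEntropy_eq_neg_sum_mul_logb_condProb hP, neg_nonneg]
  exact Finset.sum_nonpos fun x _ => mul_nonpos_of_nonneg_of_nonpos (hP x)
    (logb_nonpos one_lt_two (condProb_nonneg hP x) (condProb_le_one hP x))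

theorem condEntropy_le_neg_sum_mul_logb [Fintype B] {P r : A × B → ℝ} (hP : 0 ≤ P) (hr : 0 ≤ r)
    (hr_sum : ∀ b, ∑ a, r (a, b) ≤ 1) (hr_pos : ∀ x, 0 < P x → 0 < r x) :
    condEntropy P ≤ -∑ x, P x * logb 2 (r x) := by
  have hPB : ∀ x, 0 < P x → 0 < ∑ a, P (a, x.2) := fun x hx => hx.trans_le (le_sum_marginal hP x)
  have hne : ∀ x, P x ≠ 0 → r x ≠ 0 ∧ ∑ a, P (a, x.2) ≠ 0 := fun x hx' =>
    have hx := (hP x).lt_of_ne' hx'; ⟨(hr_pos x hx).ne', (hPB x hx).ne'⟩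
  have hmass : ∑ x, r x * ∑ a, P (a, x.2) ≤ ∑ x, P x :=
    calc ∑ x, r x * ∑ a, P (a, x.2) = ∑ b, (∑ a, r (a, b)) * ∑ a, P (a, b) :=
          (sum_marginal_mul r fun b => ∑ a, P (a, b)).symm
      _ ≤ ∑ b, 1 * ∑ a, P (a, b) := Finset.sum_le_sum fun b _ =>
          mul_le_mul_of_nonneg_right (hr_sum b) (Finset.sum_nonneg fun _ _ => hP _)
      _ = ∑ x, P x := by simp only [one_mul, Fintype.sum_prod_type_right]
  have hgibbs := sum_mul_logb_le_sum_mul_logb_self hP (Q := fun x => r x * ∑ a, P (a, x.2))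
    (fun x => mul_nonneg (hr x) (Finset.sum_nonneg fun _ _ => hP _)) hmass
    (fun x hx => mul_pos (hr_pos x hx) (hPB x hx))
  simp only [mul_logb_mul (hne _), Finset.sum_add_distrib] at hgibbs
  rw [condEntropy_eq_sum_marginal_mul_logb_sub]
  linarith

end CondEntropy

section Subadditivity

variable {A₁ A₂ B₁ B₂ : Type*}

def fstMarginal [Fintype A₂] [Fintype B₂] (P : (A₁ × A₂) × (B₁ × B₂) → ℝ) (y : A₁ × B₁) : ℝ :=
  ∑ z : A₂ × B₂, P ((y.1, z.1), (y.2, z.2))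

def sndMarginal [Fintype A₁] [Fintype B₁] (P : (A₁ × A₂) × (B₁ × B₂) → ℝ) (y : A₂ × B₂) : ℝ :=
  ∑ z : A₁ × B₁, P ((z.1, y.1), (z.2, y.2))

variable {P : (A₁ × A₂) × (B₁ × B₂) → ℝ}

section
variable [Fintype A₂] [Fintype B₂]

lemma fstMarginal_nonneg (hP : 0 ≤ P) : 0 ≤ fstMarginal P := fun _ =>
  Finset.sum_nonneg fun _ _ => hP _

lemma le_fstMarginal (hP : 0 ≤ P) (x : (A₁ × A₂) × (B₁ × B₂)) :
    P x ≤ fstMarginal P (x.1.1, x.2.1) :=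
  Finset.single_le_sum (f := fun z : A₂ × B₂ => P ((x.1.1, z.1), (x.2.1, z.2)))
    (fun _ _ => hP _) (Finset.mem_univ (x.1.2, x.2.2))

end

section
variable [Fintype A₁] [Fintype B₁]

lemma sndMarginal_nonneg (hP : 0 ≤ P) : 0 ≤ sndMarginal P := fun _ =>
  Finset.sum_nonneg fun _ _ => hP _

lemma le_sndMarginal (hP : 0 ≤ P) (x : (A₁ × A₂) × (B₁ × B₂)) :
    P x ≤ sndMarginal P (x.1.2, x.2.2) :=
  Finset.single_le_sum (f := fun z : A₁ × B₁ => P ((z.1, x.1.2), (z.2, x.2.2)))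
    (fun _ _ => hP _) (Finset.mem_univ (x.1.1, x.2.1))

end

variable [Fintype A₁] [Fintype A₂] [Fintype B₁] [Fintype B₂]

lemma sum_mul_fstMarginal (f : A₁ × B₁ → ℝ) :
    ∑ x, P x * f (x.1.1, x.2.1) = ∑ y, fstMarginal P y * f y := by
  rw [← (Equiv.prodProdProdComm A₁ A₂ B₁ B₂).symm.sum_comp, Fintype.sum_prod_type]
  simp only [fstMarginal, Finset.sum_mul]
  rfl

lemma sum_mul_sndMarginal (f : A₂ × B₂ → ℝ) :
    ∑ x, P x * f (x.1.2, x.2.2) = ∑ y, sndMarginal P y * f y := by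
  rw [← ((Equiv.prodComm _ _).trans (Equiv.prodProdProdComm A₁ A₂ B₁ B₂).symm).sum_comp,
    Fintype.sum_prod_type]
  simp only [sndMarginal, Finset.sum_mul]
  rfl

theorem condEntropy_le_condEntropy_fstMarginal_add_sndMarginal (hP : 0 ≤ P) :
    condEntropy P ≤ condEntropy (fstMarginal P) + condEntropy (sndMarginal P) := by
  set r₁ := condProb (fstMarginal P)
  set r₂ := condProb (sndMarginal P)
  have hpos : ∀ x, 0 < P x → 0 < r₁ (x.1.1, x.2.1) ∧ 0 < r₂ (x.1.2, x.2.2) := fun x hx =>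
    ⟨condProb_pos (fstMarginal_nonneg hP) (hx.trans_le (le_fstMarginal hP x)),
      condProb_pos (sndMarginal_nonneg hP) (hx.trans_le (le_sndMarginal hP x))⟩
  have hne : ∀ x, P x ≠ 0 → r₁ (x.1.1, x.2.1) ≠ 0 ∧ r₂ (x.1.2, x.2.2) ≠ 0 := fun x hx =>
    have h := hpos x ((hP x).lt_of_ne' hx); ⟨h.1.ne', h.2.ne'⟩
  have hsum : ∀ b : B₁ × B₂, ∑ a : A₁ × A₂, r₁ (a.1, b.1) * r₂ (a.2, b.2) ≤ 1 := fun b => by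
    simp only [Fintype.sum_prod_type]
    rw [← Finset.sum_mul_sum]
    exact mul_le_one₀ (sum_condProb_le_one _ _)
      (Finset.sum_nonneg fun _ _ => condProb_nonneg (sndMarginal_nonneg hP) _)
      (sum_condProb_le_one _ _)
  calc condEntropy P ≤ -∑ x, P x * logb 2 (r₁ (x.1.1, x.2.1) * r₂ (x.1.2, x.2.2)) :=
        condEntropy_le_neg_sum_mul_logb hP
          (fun x => mul_nonneg (condProb_nonneg (fstMarginal_nonneg hP) _)
            (condProb_nonneg (sndMarginal_nonneg hP) _))
          hsum (fun x hx => mul_pos (hpos x hx).1 (hpos x hx).2)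
    _ = -∑ y, fstMarginal P y * logb 2 (r₁ y) + -∑ y, sndMarginal P y * logb 2 (r₂ y) := by
        simp only [mul_logb_mul (hne _), Finset.sum_add_distrib]
        rw [sum_mul_fstMarginal (f := fun y => logb 2 (r₁ y)),
          sum_mul_sndMarginal (f := fun y => logb 2 (r₂ y))]
        ring
    _ = condEntropy (fstMarginal P) + condEntropy (sndMarginal P) := by
        rw [condEntropy_eq_neg_sum_mul_logb_condProb (fstMarginal_nonneg hP),
          condEntropy_eq_neg_sum_mul_logb_condProb (sndMarginal_nonneg hP)]

end Subadditivity

lemma Matrix.sum_kronecker_sum {α ι κ l m n p : Type*} [NonUnitalNonAssocSemiring α]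
    [Fintype ι] [Fintype κ] (A : ι → Matrix l m α) (B : κ → Matrix n p α) :
    (∑ i, A i) ⊗ₖ (∑ k, B k) = ∑ x : ι × κ, A x.1 ⊗ₖ B x.2 := by
  ext ⟨a, b⟩ ⟨c, d⟩
  simp [Matrix.sum_apply, Finset.sum_mul_sum, Fintype.sum_prod_type]

open scoped MatrixOrder in
lemma Matrix.PosSemidef.trace_mul_nonneg {𝕜 m : Type*} [RCLike 𝕜] [Fintype m] {A B : Matrix m m 𝕜}
    (hA : A.PosSemidef) (hB : B.PosSemidef) : 0 ≤ (A * B).trace := by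
  classical
  obtain ⟨C, rfl⟩ := CStarAlgebra.nonneg_iff_eq_star_mul_self.mp hA.nonneg
  rw [Matrix.mul_assoc, Matrix.trace_mul_comm]
  exact (hB.mul_mul_conjTranspose_same C).trace_nonneg

lemma Matrix.PosSemidef.re_trace_kronecker_mul_kronecker {m n : Type*} [Fintype m] [Fintype n]
    {A C : Matrix m m ℂ} {B D : Matrix n n ℂ} (hA : A.PosSemidef) (hB : B.PosSemidef)
    (hC : C.PosSemidef) (hD : D.PosSemidef) :
    ((A ⊗ₖ B) * (C ⊗ₖ D)).trace.re = (A * C).trace.re * (B * D).trace.re := by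
  have hAC := Complex.nonneg_iff.mp (hA.trace_mul_nonneg hC)
  have hBD := Complex.nonneg_iff.mp (hB.trace_mul_nonneg hD)
  rw [← Matrix.mul_kronecker_mul, Matrix.trace_kronecker, Complex.mul_re, ← hAC.2, ← hBD.2,
    mul_zero, sub_zero]

namespace POVM

variable {n : Type} [Fintype n] [DecidableEq n]

instance : Nonempty (POVM n) :=
  ⟨⟨Unit, fun _ => 1, fun _ => .one, by simp⟩⟩

def kronecker {m : Type} [Fintype m] [DecidableEq m] (Q₁ : POVM m) (Q₂ : POVM n) :
    POVM (m × n) where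
  ι := Q₁.ι × Q₂.ι
  elem j := Q₁.elem j.1 ⊗ₖ Q₂.elem j.2
  psd j := (Q₁.psd j.1).kronecker (Q₂.psd j.2)
  sum_eq_one := by
    rw [← Matrix.sum_kronecker_sum, Q₁.sum_eq_one, Q₂.sum_eq_one, Matrix.one_kronecker_one]

lemma sum_re_trace_mul_elem (Q : POVM n) {ρ : Matrix n n ℂ} (hρ : IsDensityMatrix ρ) :
    ∑ j, (ρ * Q.elem j).trace.re = 1 := by
  rw [← Complex.re_sum, ← Matrix.trace_sum, ← Matrix.mul_sum, Q.sum_eq_one, Matrix.mul_one,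
    hρ.2, Complex.one_re]

end POVM

section Equivocation

variable {n : Type} [Fintype n] [DecidableEq n] {I : Type}

def jointDist (p : I → ℝ) (ρ : I → Matrix n n ℂ) (Q : POVM n) (x : I × Q.ι) : ℝ :=
  p x.1 * ((ρ x.1 * Q.elem x.2).trace).re

def equivocation [Fintype I] (p : I → ℝ) (ρ : I → Matrix n n ℂ) (Q : POVM n) : ℝ :=
  condEntropy (jointDist p ρ Q)

lemma Sacc_eq_iInf_equivocation [Fintype I] (p : I → ℝ) (ρ : I → Matrix n n ℂ) :
    Sacc p ρ = ⨅ Q, equivocation p ρ Q :=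
  congrArg sInf (Set.ext fun _ => exists_congr fun _ => eq_comm)

variable {p : I → ℝ} {ρ : I → Matrix n n ℂ}

lemma jointDist_nonneg (hp : 0 ≤ p) (hρ : ∀ i, (ρ i).PosSemidef) (Q : POVM n) :
    0 ≤ jointDist p ρ Q := fun x =>
  mul_nonneg (hp x.1) (Complex.nonneg_iff.mp ((hρ x.1).trace_mul_nonneg (Q.psd x.2))).1

lemma bddBelow_range_equivocation [Fintype I] (hp : 0 ≤ p) (hρ : ∀ i, (ρ i).PosSemidef) :
    BddBelow (Set.range (equivocation p ρ)) :=
  ⟨0, Set.forall_mem_range.mpr fun Q => condEntropy_nonneg (jointDist_nonneg hp hρ Q)⟩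

end Equivocation

section Kronecker

variable {m n : Type} [Fintype m] [DecidableEq m] [Fintype n] [DecidableEq n]
  {I₁ I₂ : Type} {p : I₁ × I₂ → ℝ}
  {ρ₁ : I₁ → Matrix m m ℂ} {ρ₂ : I₂ → Matrix n n ℂ} (Q₁ : POVM m) (Q₂ : POVM n)

lemma jointDist_kronecker (hρ₁ : ∀ i, (ρ₁ i).PosSemidef) (hρ₂ : ∀ i, (ρ₂ i).PosSemidef)
    (x : (I₁ × I₂) × (Q₁.kronecker Q₂).ι) :
    jointDist p (fun i => ρ₁ i.1 ⊗ₖ ρ₂ i.2) (Q₁.kronecker Q₂) x =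
      p x.1 * (ρ₁ x.1.1 * Q₁.elem x.2.1).trace.re * (ρ₂ x.1.2 * Q₂.elem x.2.2).trace.re := by
  unfold jointDist
  rw [mul_assoc]
  congr 1
  exact (hρ₁ _).re_trace_kronecker_mul_kronecker (hρ₂ _) (Q₁.psd _) (Q₂.psd _)

lemma fstMarginal_jointDist_kronecker [Fintype I₂] (hρ₁ : ∀ i, (ρ₁ i).PosSemidef)
    (hρ₂ : ∀ i, IsDensityMatrix (ρ₂ i)) :
    fstMarginal (jointDist p (fun i => ρ₁ i.1 ⊗ₖ ρ₂ i.2) (Q₁.kronecker Q₂)) =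
      jointDist (fun i₁ => ∑ i₂, p (i₁, i₂)) ρ₁ Q₁ := by
  ext y
  calc fstMarginal (jointDist p (fun i => ρ₁ i.1 ⊗ₖ ρ₂ i.2) (Q₁.kronecker Q₂)) y
      = ∑ z : I₂ × Q₂.ι, p (y.1, z.1) * (ρ₁ y.1 * Q₁.elem y.2).trace.re *
          (ρ₂ z.1 * Q₂.elem z.2).trace.re :=
        Fintype.sum_congr _ _ fun _ => jointDist_kronecker Q₁ Q₂ hρ₁ (fun i => (hρ₂ i).1) _
    _ = (∑ i₂, p (y.1, i₂)) * (ρ₁ y.1 * Q₁.elem y.2).trace.re := by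
        simp only [Fintype.sum_prod_type, ← Finset.mul_sum, Q₂.sum_re_trace_mul_elem (hρ₂ _),
          mul_one, Finset.sum_mul]

lemma sndMarginal_jointDist_kronecker [Fintype I₁] (hρ₁ : ∀ i, IsDensityMatrix (ρ₁ i))
    (hρ₂ : ∀ i, (ρ₂ i).PosSemidef) :
    sndMarginal (jointDist p (fun i => ρ₁ i.1 ⊗ₖ ρ₂ i.2) (Q₁.kronecker Q₂)) =
      jointDist (fun i₂ => ∑ i₁, p (i₁, i₂)) ρ₂ Q₂ := by
  ext y
  calc sndMarginal (jointDist p (fun i => ρ₁ i.1 ⊗ₖ ρ₂ i.2) (Q₁.kronecker Q₂)) y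
      = ∑ z : I₁ × Q₁.ι, p (z.1, y.1) * (ρ₁ z.1 * Q₁.elem z.2).trace.re *
          (ρ₂ y.1 * Q₂.elem y.2).trace.re :=
        Fintype.sum_congr _ _ fun _ => jointDist_kronecker Q₁ Q₂ (fun i => (hρ₁ i).1) hρ₂ _
    _ = (∑ i₁, p (i₁, y.1)) * (ρ₂ y.1 * Q₂.elem y.2).trace.re := by
        simp only [Fintype.sum_prod_type, ← Finset.sum_mul, ← Finset.mul_sum,
          Q₁.sum_re_trace_mul_elem (hρ₁ _), mul_one]

end Kronecker

/-- subadditivity of the accessible equivocation: for any joint prior `p`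
on `I₁ × I₂`, the accessible equivocation of the product family is at most the sum of the
accessible equivocations of the marginal ensembles. -/
theorem sacc_subadditive
    {D₁ D₂ : ℕ} {I₁ I₂ : Type} [Fintype I₁] [Fintype I₂]
    (ρ₁ : I₁ → Matrix (Fin D₁) (Fin D₁) ℂ) (hρ₁ : ∀ i, IsDensityMatrix (ρ₁ i))
    (ρ₂ : I₂ → Matrix (Fin D₂) (Fin D₂) ℂ) (hρ₂ : ∀ i, IsDensityMatrix (ρ₂ i))
    (p : I₁ × I₂ → ℝ) (hp : IsProbDist p) :
    Sacc p (fun i : I₁ × I₂ => ρ₁ i.1 ⊗ₖ ρ₂ i.2)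
    ≤ Sacc (fun i₁ => ∑ i₂, p (i₁, i₂)) ρ₁ + Sacc (fun i₂ => ∑ i₁, p (i₁, i₂)) ρ₂ := by
  have hρ : ∀ i : I₁ × I₂, (ρ₁ i.1 ⊗ₖ ρ₂ i.2).PosSemidef := fun i =>
    (hρ₁ i.1).1.kronecker (hρ₂ i.2).1
  simp only [Sacc_eq_iInf_equivocation]
  refine le_ciInf_add_ciInf fun Q₁ Q₂ =>
    (ciInf_le (bddBelow_range_equivocation hp.1 hρ) (Q₁.kronecker Q₂)).trans ?_
  calc equivocation p _ (Q₁.kronecker Q₂)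
      ≤ condEntropy (fstMarginal (jointDist p _ (Q₁.kronecker Q₂))) +
          condEntropy (sndMarginal (jointDist p _ (Q₁.kronecker Q₂))) :=
        condEntropy_le_condEntropy_fstMarginal_add_sndMarginal
          (jointDist_nonneg hp.1 hρ (Q₁.kronecker Q₂))
    _ = _ := by
        rw [fstMarginal_jointDist_kronecker Q₁ Q₂ (fun i => (hρ₁ i).1) hρ₂,
          sndMarginal_jointDist_kronecker Q₁ Q₂ hρ₁ fun i => (hρ₂ i).1]
        rfl

end
end

section
/- Let {p_i, ρ_i}_{i∈I} be an ensemble on a finite-dimensional complex Hilbert space E whose average state ρ̄ = ∑_i p_i ρ_i is positive definite. Then the family M = (M_i)_{i∈I} with M_i = ρ̄^{−1/2} p_i ρ_i ρ̄^{−1/2} is a POVM on E, and the accessible equivocation of the ensemble equals the constrained minimum output entropy of the qc-channel of M at ρ̄: S_acc({p_i, ρ_i}) = Ĥ(M | ρ̄). -/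
/-! Write `S = ρ̄^{1/2}`. Conjugation by `S` matches the POVMs `Q` with the ensembles
`{q_j, ψ_j}` averaging to `ρ̄`, through `q_j ψ_j = S Q_j S`; by cyclicity of the trace,
`tr(p_i ρ_i Q_j) = q_j tr(ψ_j M_i)`. So the joint distribution of `(i, j)` under `Q` is
`q_j` times the output distribution `M(ψ_j)`, and the chain rule
`H(I|J) = ∑_j q_j H(M(ψ_j))` shows that both infima run over the same set of values. -/

open scoped BigOperators ComplexOrder

noncomputable section

open Kronecker

/-- A finite ensemble of density matrices on the space with index type `n`. -/
structure FinEnsemble (n : Type) [Fintype n] where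
  ι : Type
  [fin : Fintype ι]
  q : ι → ℝ
  ψ : ι → Matrix n n ℂ
  hq : (∀ j, 0 ≤ q j) ∧ ∑ j, q j = 1
  hψ : ∀ j, IsDensityMatrix (ψ j)

attribute [instance] FinEnsemble.fin
noncomputable def Matrix.PosSemidef.sqrt {n 𝕜 : Type*} [Fintype n] [DecidableEq n] [RCLike 𝕜]
    {A : Matrix n n 𝕜} (hA : A.PosSemidef) : Matrix n n 𝕜 :=
  hA.1.eigenvectorUnitary.1 * Matrix.diagonal ((↑) ∘ (√·) ∘ hA.1.eigenvalues) *
  (star hA.1.eigenvectorUnitary : Matrix n n 𝕜)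

namespace Matrix.PosSemidef

variable {n 𝕜 : Type*} [Fintype n] [DecidableEq n] [RCLike 𝕜] {A : Matrix n n 𝕜}

lemma posSemidef_sqrt (hA : A.PosSemidef) : hA.sqrt.PosSemidef :=
  (PosSemidef.diagonal fun i => by simp [Real.sqrt_nonneg]).mul_mul_conjTranspose_same
    (hA.1.eigenvectorUnitary : Matrix n n 𝕜)

lemma sqrt_mul_self (hA : A.PosSemidef) : hA.sqrt * hA.sqrt = A := by
  unfold Matrix.PosSemidef.sqrt
  conv_rhs => rw [hA.1.spectral_theorem, Unitary.conjStarAlgAut_apply]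
  have hU : (star hA.1.eigenvectorUnitary : Matrix n n 𝕜) * hA.1.eigenvectorUnitary.1 = 1 :=
    Unitary.coe_star_mul_self _
  simp only [mul_assoc]
  rw [← mul_assoc (star _) _ _, hU, one_mul, ← mul_assoc (Matrix.diagonal _),
    Matrix.diagonal_mul_diagonal]
  congr 3
  funext i
  simp only [Function.comp_apply]
  rw [← RCLike.ofReal_mul, Real.mul_self_sqrt (hA.eigenvalues_nonneg i)]

end Matrix.PosSemidef

lemma Matrix.PosSemidef.trace_eq_re_trace {n : Type*} [Fintype n] {A : Matrix n n ℂ}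
    (hA : A.PosSemidef) : A.trace = (A.trace.re : ℂ) :=
  Complex.eq_re_of_ofReal_le (r := 0) (by simpa using hA.trace_nonneg)

lemma Matrix.PosDef.isUnit_det_sqrt {n 𝕜 : Type*} [Fintype n] [DecidableEq n] [RCLike 𝕜]
    {A : Matrix n n 𝕜} (hA : A.PosDef) : IsUnit hA.posSemidef.sqrt.det := by
  have hA' : IsUnit (hA.posSemidef.sqrt.det * hA.posSemidef.sqrt.det) := by
    rw [← Matrix.det_mul, hA.posSemidef.sqrt_mul_self]
    exact isUnit_iff_ne_zero.mpr hA.det_pos.ne'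
  exact isUnit_of_mul_isUnit_left hA'

lemma IsDensityMatrix.sum_smul {n I : Type*} [Fintype n] [Fintype I] {p : I → ℝ}
    (hp : IsProbDist p) {ρ : I → Matrix n n ℂ} (hρ : ∀ i, IsDensityMatrix (ρ i)) :
    IsDensityMatrix (∑ i, p i • ρ i) := by
  refine ⟨Matrix.posSemidef_sum _ fun i _ => (hρ i).1.smul (hp.1 i), ?_⟩
  simp_rw [Matrix.trace_sum, Matrix.trace_smul, fun i => (hρ i).2, Complex.real_smul, mul_one]
  exact_mod_cast hp.2

section Entropy

variable {A B : Type*} [Fintype A] [Fintype B]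

lemma shannonEntropy_eq_sum_negMulLog (p : A → ℝ) :
    shannonEntropy p = (∑ a, Real.negMulLog (p a)) / Real.log 2 := by
  simp only [shannonEntropy, Real.negMulLog, Real.logb, Finset.sum_div, ← Finset.sum_neg_distrib]
  congr 1 with a
  ring

theorem condEntropy_mul_eq_sum (q : B → ℝ) (r : B → A → ℝ) (hr : ∀ b, ∑ a, r b a = 1) :
    condEntropy (fun x : A × B => q x.2 * r x.2 x.1) = ∑ b, q b * shannonEntropy (r b) := by
  have hmarg : ∀ b, ∑ a, q b * r b a = q b := fun b => by rw [← Finset.mul_sum, hr, mul_one]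
  simp only [condEntropy, hmarg, shannonEntropy_eq_sum_negMulLog, Fintype.sum_prod_type_right,
    Real.negMulLog_mul, Finset.sum_add_distrib, ← Finset.sum_mul, hr, one_mul, ← Finset.mul_sum]
  simp only [← mul_div_assoc, ← Finset.sum_div]
  ring

end Entropy

lemma Matrix.trace_mul_conj_comm {n R : Type*} [Fintype n] [CommSemiring R]
    (A B T : Matrix n n R) : (A * (T * B * T)).trace = (B * (T * A * T)).trace := by
  simpa only [Matrix.mul_assoc] using Matrix.trace_mul_comm (A * T) (B * T)

section ConjugatedEnsemble

variable {n : Type*} [Fintype n] [DecidableEq n]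

lemma isPOVM_conj_smul_of_sum_eq {J : Type*} [Fintype J] {T σ : Matrix n n ℂ} (hT : T.IsHermitian)
    (hTσT : T * σ * T = 1) {q : J → ℝ} (hq : ∀ j, 0 ≤ q j) {ψ : J → Matrix n n ℂ}
    (hψ : ∀ j, (ψ j).PosSemidef) (hqψ : ∑ j, q j • ψ j = σ) :
    IsPOVM fun j => T * (q j • ψ j) * T := by
  refine ⟨fun j => ?_, ?_⟩
  · simpa [hT.eq] using ((hψ j).smul (hq j)).conjTranspose_mul_mul_same T
  · rw [← Finset.sum_mul, ← Finset.mul_sum, hqψ, hTσT]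

theorem condEntropy_conj_smul_eq_sum {I J : Type*} [Fintype I] [Fintype J] (T : Matrix n n ℂ)
    (p : I → ℝ) (ρ : I → Matrix n n ℂ) (hM : ∑ i, T * (p i • ρ i) * T = 1)
    (q : J → ℝ) (ψ : J → Matrix n n ℂ) (hψ : ∀ j, (ψ j).trace = 1) :
    condEntropy (fun x : I × J => p x.1 * ((ρ x.1 * (T * (q x.2 • ψ x.2) * T)).trace).re)
      = ∑ j, q j * shannonEntropy fun i => ((ψ j * (T * (p i • ρ i) * T)).trace).re := by
  have hjoint : ∀ i j, p i * ((ρ i * (T * (q j • ψ j) * T)).trace).re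
      = q j * ((ψ j * (T * (p i • ρ i) * T)).trace).re := by
    intro i j
    simp only [Matrix.mul_smul, Matrix.smul_mul, Matrix.trace_smul, Complex.real_smul,
      Complex.re_ofReal_mul, Matrix.trace_mul_conj_comm (ρ i) (ψ j) T]
    ring
  simp only [hjoint]
  refine condEntropy_mul_eq_sum q (fun j i => ((ψ j * (T * (p i • ρ i) * T)).trace).re)
    fun j => ?_
  rw [← Complex.re_sum, ← Matrix.trace_sum, ← Finset.mul_sum, hM, Matrix.mul_one, hψ,
    Complex.one_re]

/-- The witness is `q_j ψ_j = S Q_j S`, with the state `σ` on the outcomes of weight zero. -/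
theorem IsPOVM.exists_ensemble_conj {J : Type*} [Fintype J] {S σ : Matrix n n ℂ}
    (hS : S.IsHermitian) (hS_det : IsUnit S.det) (hSσ : S * S = σ) (hσ : IsDensityMatrix σ)
    {Q : J → Matrix n n ℂ} (hQ : IsPOVM Q) :
    ∃ (q : J → ℝ) (ψ : J → Matrix n n ℂ), IsProbDist q ∧ (∀ j, IsDensityMatrix (ψ j)) ∧
      ∑ j, q j • ψ j = σ ∧ ∀ j, Q j = S⁻¹ * (q j • ψ j) * S⁻¹ := by
  set R := fun j => S * Q j * S
  have hR : ∀ j, (R j).PosSemidef := fun j => by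
    simpa [hS.eq] using (hQ.1 j).conjTranspose_mul_mul_same S
  have hsumR : ∑ j, R j = σ := by
    simp only [R, ← Finset.sum_mul, ← Finset.mul_sum, hQ.2, Matrix.mul_one, hSσ]
  set q := fun j => (R j).trace.re
  have hRq : ∀ j, (R j).trace = q j := fun j => (hR j).trace_eq_re_trace
  have hq : ∀ j, 0 ≤ q j := fun j => (Complex.nonneg_iff.1 (hR j).trace_nonneg).1
  set ψ := fun j => if q j = 0 then σ else (q j)⁻¹ • R j
  have hqψ : ∀ j, q j • ψ j = R j := by
    intro j
    by_cases hj : q j = 0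
    · simp [ψ, hj, ((hR j).trace_eq_zero_iff).1 (by rw [hRq, hj]; simp)]
    · simp [ψ, hj, smul_smul]
  refine ⟨q, ψ, ⟨hq, ?_⟩, fun j => ?_, ?_, fun j => ?_⟩
  · simp only [q, ← Complex.re_sum, ← Matrix.trace_sum, hsumR, hσ.2, Complex.one_re]
  · by_cases hj : q j = 0
    · simpa [ψ, hj] using hσ
    · refine ⟨by simpa [ψ, hj] using (hR j).smul (inv_nonneg.2 (hq j)), ?_⟩
      simp [ψ, hj, Matrix.trace_smul, hRq, Complex.real_smul]
  · simp only [hqψ, hsumR]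
  · simp only [hqψ, R, ← Matrix.mul_assoc, Matrix.nonsing_inv_mul _ hS_det, Matrix.one_mul]
    simp only [Matrix.mul_assoc, Matrix.mul_nonsing_inv _ hS_det, Matrix.mul_one]

end ConjugatedEnsemble

/-- for an ensemble `{p_i, ρ_i}` with positive definite average state
`ρ̄ = ∑ p_i ρ_i`, the family `M_i = ρ̄^{-1/2} p_i ρ_i ρ̄^{-1/2}` is a POVM, and the
accessible equivocation of the ensemble equals the constrained minimum output entropy
`Ĥ(M | ρ̄)` of the qc-channel of `M`. -/
theorem sacc_eq_constrained_min_output_entropy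
    {D : ℕ} {I : Type} [Fintype I]
    (p : I → ℝ) (hp : IsProbDist p)
    (ρ : I → Matrix (Fin D) (Fin D) ℂ) (hρ : ∀ i, IsDensityMatrix (ρ i))
    (hbar : (∑ i, p i • ρ i).PosDef) :
    (∀ i, ((hbar.posSemidef.sqrt)⁻¹ * (p i • ρ i) * (hbar.posSemidef.sqrt)⁻¹).PosSemidef) ∧
    (∑ i, (hbar.posSemidef.sqrt)⁻¹ * (p i • ρ i) * (hbar.posSemidef.sqrt)⁻¹) = 1 ∧
    Sacc p ρ
      = sInf { h : ℝ | ∃ E : FinEnsemble (Fin D),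
          (∑ j, E.q j • E.ψ j) = ∑ i, p i • ρ i ∧
          h = ∑ j, E.q j * shannonEntropy (fun i =>
            ((E.ψ j * ((hbar.posSemidef.sqrt)⁻¹ * (p i • ρ i)
                * (hbar.posSemidef.sqrt)⁻¹)).trace).re) } := by
  set σ := ∑ i, p i • ρ i
  set S := hbar.posSemidef.sqrt
  have hS : S.IsHermitian := hbar.posSemidef.posSemidef_sqrt.1
  have hS_det : IsUnit S.det := hbar.isUnit_det_sqrt
  have hSσ : S * S = σ := hbar.posSemidef.sqrt_mul_self
  have hSσS : S⁻¹ * σ * S⁻¹ = 1 := by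
    rw [← hSσ, ← Matrix.mul_assoc, Matrix.nonsing_inv_mul _ hS_det, Matrix.one_mul,
      Matrix.mul_nonsing_inv _ hS_det]
  have hM := isPOVM_conj_smul_of_sum_eq hS.inv hSσS hp.1 (fun i => (hρ i).1) rfl
  refine ⟨hM.1, hM.2, congrArg sInf (Set.ext fun h => ⟨?_, ?_⟩)⟩
  · rintro ⟨Q, rfl⟩
    obtain ⟨q, ψ, hq, hψ, hqψ, hQ⟩ := IsPOVM.exists_ensemble_conj hS hS_det hSσ
      (IsDensityMatrix.sum_smul hp hρ) (Q := Q.elem) ⟨Q.psd, Q.sum_eq_one⟩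
    refine ⟨⟨Q.ι, q, ψ, hq, hψ⟩, hqψ, ?_⟩
    simp only [hQ]
    exact condEntropy_conj_smul_eq_sum _ p ρ hM.2 q ψ fun j => (hψ j).2
  · rintro ⟨E, hE, rfl⟩
    have hQ := isPOVM_conj_smul_of_sum_eq hS.inv hSσS E.hq.1 (fun j => (E.hψ j).1) hE
    exact ⟨⟨E.ι, _, hQ.1, hQ.2⟩,
      (condEntropy_conj_smul_eq_sum _ p ρ hM.2 E.q E.ψ fun j => (E.hψ j).2).symm⟩
end
end
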